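/- arXiv:1411.0552 — 5 statements merged into one kernel-verified Lean document; each statement's English description precedes it below -/
import Mathlib

section
/- Suppose g : [0,∞) → [0,∞) is differentiable and satisfies g'(t) ≤ γ(t)g(t) + α(t)g(t)^p + β(t) for all t ≥ 0, where p > 1, α, β ≥ 0, M₁ := sup_{t≥0} ∫₀ᵗ γ + ε^{p-1}∫₀^∞ α < ∞ for a given ε > 0. Define μ(t) = exp(−∫₀ᵗ (γ(ξ) + ε^{p-1}α(ξ)) dξ). If g(0)·e^{M₁} < ε/3 and ∫₀ᵗ β(ξ)μ(ξ)dξ / μ(t) < ε/3 for all t ≥ 0, then g(t) ≤ ε for all t ≥ 0. -/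
/-!
While `g ≤ ε` on `[0, T]`, the nonlinear term is dominated linearly, `α g ^ p ≤ ε ^ (p - 1) α g`,
so `g' ≤ c g + β` with `c = γ + ε ^ (p - 1) α`, and the integrating factor
`μ t = exp (-∫₀ᵗ c)` gives `μ T * g T ≤ g 0 + ∫₀ᵀ β μ`. As `1 / μ T ≤ exp M₁`, this forces
`g T < 2ε/3`, so by continuity `g` never reaches `ε`.

Since `c` is only locally integrable, `μ` need not be differentiable. The comparison is
first proved for continuous coefficients, where it is the product rule, and then transferred to
`c` by approximating it in `L¹` by continuous functions.
-/

open MeasureTheory intervalIntegral Real Set Filter Topology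

theorem forall_le_of_forall_Ico_le_imp_lt {g : ℝ → ℝ} {a ε : ℝ} (hg : Continuous g)
    (h : ∀ T ≥ a, (∀ s ∈ Ico a T, g s ≤ ε) → g T < ε) : ∀ t ≥ a, g t ≤ ε := by
  intro t ht
  have hle : Icc a t ⊆ {s | g s ≤ ε} := by
    refine (isClosed_le hg continuous_const).inter isClosed_Icc
      |>.Icc_subset_of_forall_mem_nhdsGT_of_Icc_subset ?_ fun T hT hIcc => ?_
    · exact (h a le_rfl (by simp)).le
    · have hlt : g T < ε := h T hT.1 fun s hs => hIcc (Ico_subset_Icc_self hs)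
      have hnhds : {s | g s < ε} ∈ 𝓝 T := (isOpen_lt hg continuous_const).mem_nhds hlt
      exact mem_nhdsWithin_of_mem_nhds <| mem_of_superset hnhds fun s (hs : g s < ε) => hs.le
  exact hle ⟨ht, le_rfl⟩

theorem Real.rpow_le_rpow_sub_one_mul {x ε p : ℝ} (hx : 0 ≤ x) (hxε : x ≤ ε) (hp : 1 ≤ p) :
    x ^ p ≤ ε ^ (p - 1) * x := by
  calc x ^ p = x ^ (p - 1) * x := by
        rw [← rpow_add_one' hx (by linarith), sub_add_cancel]
    _ ≤ ε ^ (p - 1) * x := by gcongr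

noncomputable def integratingFactor (c : ℝ → ℝ) (a t : ℝ) : ℝ :=
  exp (-∫ s in a..t, c s)

theorem integratingFactor_pos (c : ℝ → ℝ) (a t : ℝ) : 0 < integratingFactor c a t :=
  exp_pos _

@[simp]
theorem integratingFactor_self (c : ℝ → ℝ) (a : ℝ) : integratingFactor c a a = 1 := by
  simp [integratingFactor]

theorem hasDerivAt_integratingFactor {c : ℝ → ℝ} (hc : Continuous c) (a t : ℝ) :
    HasDerivAt (integratingFactor c a) (-c t * integratingFactor c a t) t := by
  rw [mul_comm]
  exact ((hc.integral_hasStrictDerivAt a t).hasDerivAt.neg).exp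

theorem continuousOn_integratingFactor {c : ℝ → ℝ} {a b : ℝ} (hab : a ≤ b)
    (hc : IntegrableOn c (Icc a b)) : ContinuousOn (integratingFactor c a) (Icc a b) := by
  rw [← uIcc_of_le hab] at hc ⊢
  exact (continuousOn_primitive_interval hc).neg.rexp

theorem integratingFactor_le_exp_mul {c h : ℝ → ℝ} {a t δ : ℝ} (hat : a ≤ t)
    (hc : IntervalIntegrable c volume a t) (hh : IntervalIntegrable h volume a t)
    (hch : ∫ s in a..t, |c s - h s| ≤ δ) :
    integratingFactor c a t ≤ exp δ * integratingFactor h a t := by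
  have hprim : |(∫ s in a..t, c s) - ∫ s in a..t, h s| ≤ δ := by
    rw [← integral_sub hc hh]
    exact (abs_integral_le_integral_abs hat).trans hch
  rw [integratingFactor, integratingFactor, ← exp_add]
  gcongr
  linarith [(abs_le.1 hprim).1]

theorem exists_continuous_intervalIntegral_abs_sub_le {c : ℝ → ℝ} {a b δ : ℝ}
    (hc : IntegrableOn c (Icc a b)) (hδ : 0 < δ) :
    ∃ h : ℝ → ℝ, Continuous h ∧ ∀ x ∈ Icc a b, ∫ s in a..x, |c s - h s| ≤ δ := by
  obtain ⟨h, -, hL1, hcont, hint⟩ :=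
    (hc.integrable_indicator measurableSet_Icc).exists_hasCompactSupport_integral_sub_le hδ
  refine ⟨h, hcont, fun x hx => ?_⟩
  calc ∫ s in a..x, |c s - h s|
      = ∫ s in Ioc a x, ‖(Icc a b).indicator c s - h s‖ := by
        rw [integral_of_le hx.1]
        refine setIntegral_congr_fun measurableSet_Ioc fun s hs => ?_
        rw [indicator_of_mem (Ioc_subset_Icc_self.trans (Icc_subset_Icc_right hx.2) hs),
          Real.norm_eq_abs]
    _ ≤ ∫ s, ‖(Icc a b).indicator c s - h s‖ :=
        setIntegral_le_integral ((hc.integrable_indicator measurableSet_Icc).sub hint).norm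
          (Eventually.of_forall fun _ => norm_nonneg _)
    _ ≤ δ := hL1

theorem integratingFactor_mul_le_of_continuous {u u' c f : ℝ → ℝ} {a b : ℝ} (hab : a ≤ b)
    (hc : Continuous c) (hf : IntegrableOn f (Icc a b)) (hu : ContinuousOn u (Icc a b))
    (hu' : ∀ x ∈ Ioo a b, HasDerivAt u (u' x) x)
    (hineq : ∀ x ∈ Ioo a b, u' x ≤ c x * u x + f x) :
    integratingFactor c a b * u b ≤ u a + ∫ t in a..b, integratingFactor c a t * f t := by
  have hν := hasDerivAt_integratingFactor hc a
  have hνcont : Continuous (integratingFactor c a) :=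
    continuous_iff_continuousAt.2 fun t => (hν t).continuousAt
  have hFTC := sub_le_integral_of_hasDeriv_right_of_le hab (hνcont.continuousOn.mul hu)
    (fun x hx => ((hν x).mul (hu' x hx)).hasDerivWithinAt)
    (hf.continuousOn_mul hνcont.continuousOn isCompact_Icc) fun x hx => by
      have := mul_le_mul_of_nonneg_left (hineq x hx) (integratingFactor_pos c a x).le
      linarith
  simp only [Pi.mul_apply, integratingFactor_self, one_mul] at hFTC
  linarith

theorem integral_integratingFactor_mul_add_le {c h f : ℝ → ℝ} {a b δ B M : ℝ} (hab : a ≤ b)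
    (hc : IntegrableOn c (Icc a b)) (hh : Continuous h)
    (hch : ∀ x ∈ Icc a b, ∫ s in a..x, |c s - h s| ≤ δ)
    (hf : IntegrableOn f (Icc a b)) (hf0 : ∀ x ∈ Icc a b, 0 ≤ f x) (hB : 0 ≤ B)
    (hνM : ∀ x ∈ Icc a b, integratingFactor c a x ≤ M) :
    ∫ t in a..b, integratingFactor h a t * (f t + B * |c t - h t|) ≤
      exp δ * ((∫ t in a..b, integratingFactor c a t * f t) + M * B * δ) := by
  have hI : ∀ {g : ℝ → ℝ} {x}, x ∈ Icc a b → IntegrableOn g (Icc a b) →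
      IntervalIntegrable g volume a x := fun hx hg =>
    (hg.mono_set (uIcc_of_le hx.1 ▸ Icc_subset_Icc_right hx.2)).intervalIntegrable
  have hb : b ∈ Icc a b := ⟨hab, le_rfl⟩
  have hhI : IntegrableOn h (Icc a b) := hh.continuousOn.integrableOn_compact isCompact_Icc
  have hdiff : IntegrableOn (fun s => |c s - h s|) (Icc a b) := (hc.sub hhI).abs
  have hνf := hI hb (hf.continuousOn_mul (continuousOn_integratingFactor hab hc) isCompact_Icc)
  calc ∫ t in a..b, integratingFactor h a t * (f t + B * |c t - h t|)
      ≤ ∫ t in a..b, (exp δ * (integratingFactor c a t * f t) + exp δ * M * B * |c t - h t|) := by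
        refine integral_mono_on hab (hI hb ((hf.add (hdiff.const_mul B)).continuousOn_mul
            (continuousOn_integratingFactor hab hhI) isCompact_Icc))
          ((hνf.const_mul _).add ((hI hb hdiff).const_mul _)) fun x hx => ?_
        have hνh : integratingFactor h a x ≤ exp δ * integratingFactor c a x :=
          integratingFactor_le_exp_mul hx.1 (hI hx hhI) (hI hx hc) <| by
            simpa only [abs_sub_comm] using hch x hx
        have hνx : integratingFactor h a x ≤ exp δ * M :=
          hνh.trans (mul_le_mul_of_nonneg_left (hνM x hx) (exp_pos δ).le)
        have h1 := mul_le_mul_of_nonneg_right hνh (hf0 x hx)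
        have h2 := mul_le_mul_of_nonneg_right hνx (mul_nonneg hB (abs_nonneg (c x - h x)))
        linarith
    _ = exp δ * (∫ t in a..b, integratingFactor c a t * f t) +
          exp δ * M * B * ∫ t in a..b, |c t - h t| := by
        rw [integral_add (hνf.const_mul _) ((hI hb hdiff).const_mul _),
          intervalIntegral.integral_const_mul, intervalIntegral.integral_const_mul]
    _ ≤ exp δ * ((∫ t in a..b, integratingFactor c a t * f t) + M * B * δ) := by
        have hM : 0 ≤ M := (integratingFactor_pos c a a).le.trans (hνM a ⟨le_rfl, hab⟩)
        have := mul_le_mul_of_nonneg_left (hch b hb) (by positivity : 0 ≤ exp δ * M * B)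
        linarith

theorem integratingFactor_mul_le_of_integral_abs_sub_le {u u' c h f : ℝ → ℝ} {a b δ B M : ℝ}
    (hab : a ≤ b) (hc : IntegrableOn c (Icc a b)) (hh : Continuous h)
    (hch : ∀ x ∈ Icc a b, ∫ s in a..x, |c s - h s| ≤ δ)
    (hf : IntegrableOn f (Icc a b)) (hf0 : ∀ x ∈ Icc a b, 0 ≤ f x)
    (hu : ContinuousOn u (Icc a b)) (hu' : ∀ x ∈ Ioo a b, HasDerivAt u (u' x) x)
    (hineq : ∀ x ∈ Ioo a b, u' x ≤ c x * u x + f x) (hub : 0 ≤ u b)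
    (huB : ∀ x ∈ Icc a b, |u x| ≤ B) (hνM : ∀ x ∈ Icc a b, integratingFactor c a x ≤ M) :
    integratingFactor c a b * u b ≤
      exp δ * (u a + exp δ * ((∫ t in a..b, integratingFactor c a t * f t) + M * B * δ)) := by
  have hB : 0 ≤ B := (abs_nonneg _).trans (huB a ⟨le_rfl, hab⟩)
  have hhI : IntegrableOn h (Icc a b) := hh.continuousOn.integrableOn_compact isCompact_Icc
  -- the coefficient error `(c - h) u` is absorbed into the forcing term
  have hsmooth := integratingFactor_mul_le_of_continuous (f := fun t => f t + B * |c t - h t|)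
    hab hh (hf.add ((hc.sub hhI).abs.const_mul B)) hu hu' fun x hx => by
      have : (c x - h x) * u x ≤ |c x - h x| * B :=
        (le_abs_self _).trans <| (abs_mul _ _).trans_le <|
          mul_le_mul_of_nonneg_left (huB x (Ioo_subset_Icc_self hx)) (abs_nonneg _)
      linarith [hineq x hx]
  have hνc : integratingFactor c a b ≤ exp δ * integratingFactor h a b := by
    rw [← uIcc_of_le hab] at hc hhI
    exact integratingFactor_le_exp_mul hab hc.intervalIntegrable hhI.intervalIntegrable
      (hch b ⟨hab, le_rfl⟩)
  calc integratingFactor c a b * u b ≤ exp δ * integratingFactor h a b * u b :=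
        mul_le_mul_of_nonneg_right hνc hub
    _ ≤ exp δ * (u a + exp δ * ((∫ t in a..b, integratingFactor c a t * f t) + M * B * δ)) := by
        rw [mul_assoc]
        gcongr
        linarith [integral_integratingFactor_mul_add_le hab hc hh hch hf hf0 hB hνM]

theorem integratingFactor_mul_le {u u' c f : ℝ → ℝ} {a b : ℝ} (hab : a ≤ b)
    (hc : IntegrableOn c (Icc a b)) (hf : IntegrableOn f (Icc a b))
    (hf0 : ∀ x ∈ Icc a b, 0 ≤ f x) (hu : ContinuousOn u (Icc a b))
    (hu' : ∀ x ∈ Ioo a b, HasDerivAt u (u' x) x)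
    (hineq : ∀ x ∈ Ioo a b, u' x ≤ c x * u x + f x) (hub : 0 ≤ u b) :
    integratingFactor c a b * u b ≤ u a + ∫ t in a..b, integratingFactor c a t * f t := by
  obtain ⟨B, huB⟩ := isCompact_Icc.exists_bound_of_continuousOn hu
  obtain ⟨M, hνM⟩ :=
    isCompact_Icc.exists_bound_of_continuousOn (continuousOn_integratingFactor hab hc)
  set I := ∫ t in a..b, integratingFactor c a t * f t
  have happrox : ∀ δ > 0,
      integratingFactor c a b * u b ≤ exp δ * (u a + exp δ * (I + M * B * δ)) := by
    intro δ hδ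
    obtain ⟨h, hh, hch⟩ := exists_continuous_intervalIntegral_abs_sub_le hc hδ
    exact integratingFactor_mul_le_of_integral_abs_sub_le hab hc hh hch hf hf0 hu hu' hineq hub
      huB (fun x hx => (le_abs_self _).trans (hνM x hx))
  have hlim : Tendsto (fun δ => exp δ * (u a + exp δ * (I + M * B * δ))) (𝓝[>] 0)
      (𝓝 (u a + I)) := by
    have hcont : Continuous fun δ => exp δ * (u a + exp δ * (I + M * B * δ)) := by fun_prop
    simpa using (hcont.tendsto 0).mono_left nhdsWithin_le_nhds
  exact ge_of_tendsto hlim (eventually_nhdsWithin_of_forall happrox)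

theorem intervalIntegral_add_mul_le_add_mul_integral_Ioi {γ α : ℝ → ℝ} {a b k : ℝ} (hab : a ≤ b)
    (hk : 0 ≤ k) (hγ : IntervalIntegrable γ volume a b) (hα : IntegrableOn α (Ioi a))
    (hα0 : ∀ x ∈ Ioi a, 0 ≤ α x) :
    ∫ x in a..b, (γ x + k * α x) ≤ (∫ x in a..b, γ x) + k * ∫ x in Ioi a, α x := by
  have hαI : IntervalIntegrable α volume a b :=
    (intervalIntegrable_iff_integrableOn_Ioc_of_le hab).2 (hα.mono_set Ioc_subset_Ioi_self)
  rw [integral_add hγ (hαI.const_mul k), intervalIntegral.integral_const_mul]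
  gcongr
  rw [integral_of_le hab]
  exact setIntegral_mono_set hα (ae_restrict_of_forall_mem measurableSet_Ioi hα0)
    Ioc_subset_Ioi_self.eventuallyLE

theorem lyapunov_stability_scalar
    (g γ α β μ : ℝ → ℝ) (p ε M₁ : ℝ) (hp : 1 < p) (hε : 0 < ε)
    (hγ : LocallyIntegrable γ) (hα : LocallyIntegrable α) (hβ : LocallyIntegrable β)
    (hαpos : ∀ t, 0 ≤ α t) (hβpos : ∀ t, 0 ≤ β t)
    (hg0 : ∀ t ≥ 0, 0 ≤ g t) (hgdiff : Differentiable ℝ g)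
    (hineq : ∀ t ≥ 0, deriv g t ≤ γ t * g t + α t * g t ^ p + β t)
    (hμ : ∀ t, μ t = Real.exp (-∫ ξ in (0:ℝ)..t, (γ ξ + ε ^ (p - 1) * α ξ)))
    (hM₁ : ∀ t ≥ 0, (∫ ξ in (0:ℝ)..t, γ ξ) + ε ^ (p - 1) * (∫ ξ in Set.Ioi (0:ℝ), α ξ) ≤ M₁)
    (hαint : IntegrableOn α (Set.Ioi (0:ℝ)))
    (hinit : g 0 * Real.exp M₁ < ε / 3)
    (hpert : ∀ t ≥ 0, (∫ ξ in (0:ℝ)..t, β ξ * μ ξ) / μ t < ε / 3) :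
    ∀ t ≥ 0, g t ≤ ε := by
  set c : ℝ → ℝ := fun ξ => γ ξ + ε ^ (p - 1) * α ξ
  have hμc : μ = integratingFactor c 0 := funext hμ
  refine forall_le_of_forall_Ico_le_imp_lt hgdiff.continuous fun T hT hgT => ?_
  have hlin : ∀ x ∈ Ioo 0 T, deriv g x ≤ c x * g x + β x := fun x hx => by
    have := mul_le_mul_of_nonneg_left
      (rpow_le_rpow_sub_one_mul (hg0 x hx.1.le) (hgT x (Ioo_subset_Ico_self hx)) hp.le) (hαpos x)
    linarith [hineq x hx.1.le]
  have hc : LocallyIntegrable c := hγ.add (hα.smul (ε ^ (p - 1)))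
  have hgronwall := integratingFactor_mul_le hT (hc.integrableOn_isCompact isCompact_Icc)
    (hβ.integrableOn_isCompact isCompact_Icc) (fun x _ => hβpos x)
    hgdiff.continuous.continuousOn (fun x _ => (hgdiff x).hasDerivAt) hlin (hg0 T hT)
  have hcM₁ : ∫ ξ in (0:ℝ)..T, c ξ ≤ M₁ :=
    (intervalIntegral_add_mul_le_add_mul_integral_Ioi hT (rpow_nonneg hε.le _)
      (hγ.integrableOn_isCompact isCompact_uIcc).intervalIntegrable hαint
      fun x _ => hαpos x).trans (hM₁ T hT)
  have hμT : 0 < μ T := hμc ▸ integratingFactor_pos c 0 T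
  have hg0μ : g 0 / μ T ≤ g 0 * exp M₁ := by
    rw [hμ, exp_neg, div_inv_eq_mul]
    exact mul_le_mul_of_nonneg_left (exp_le_exp.2 hcM₁) (hg0 0 le_rfl)
  have hgT_le : g T ≤ g 0 / μ T + (∫ ξ in (0:ℝ)..T, β ξ * μ ξ) / μ T := by
    rw [← add_div, le_div_iff₀ hμT]
    simp only [hμc, mul_comm (β _)] at hgronwall ⊢
    linarith
  linarith [hpert T hT]
end

section
/- Suppose g : [0,∞) → [0,∞) is differentiable with g'(t) ≤ γ(t)g(t) + α(t)g(t)^p + β(t), p > 1, α, β ≥ 0. Let ν(t) = exp(−∫₀ᵗ γ). Assume ω > 0 satisfies β(t)ν(t)^p/α(t) ≤ ω^p for all t ≥ 0 (interpreted as β(t)ν(t)^p ≤ ω^p α(t)), and that (g(0)+ω)^{1−p} > (p−1)∫₀^∞ α(ξ)/ν(ξ)^{p−1} dξ. Then for all t ≥ 0, (g(t)ν(t) + ω)^{p−1} ≤ 1 / [ (g(0)+ω)^{1−p} − (p−1)∫₀ᵗ α(ξ)/ν(ξ)^{p−1} dξ ]. -/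
/-!
Multiplying by the integrating factor `ν` turns the differential inequality into
`(g ν)' ≤ (α g ^ p + β) ν`, so `g ν + ω` is dominated by `z = g 0 + ω + ∫₀ᵗ (α g ^ p + β) ν`.
The smallness condition and the superadditivity of `x ↦ x ^ p` give `z' ≤ (α / ν ^ (p - 1)) z ^ p`,
and integrating `(z ^ (1 - p))' ≥ (1 - p) α / ν ^ (p - 1)` (Bihari's argument) gives the bound.
Since `γ` is only locally integrable, `ν` is merely absolutely continuous, so both integrations
use the fundamental theorem of calculus for absolutely continuous functions; `g` is absolutely
continuous because its derivative is bounded above by an integrable function.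
-/

open MeasureTheory intervalIntegral Real Set Filter
open scoped NNReal Interval

section AbsolutelyContinuous

variable {X Y : Type*} [PseudoMetricSpace X] [PseudoMetricSpace Y] {a b : ℝ}

theorem AbsolutelyContinuousOnInterval.congr {f g : ℝ → X}
    (hf : AbsolutelyContinuousOnInterval f a b) (hfg : EqOn f g (uIcc a b)) :
    AbsolutelyContinuousOnInterval g a b := by
  refine Tendsto.congr' (eventually_inf_principal.2 (Eventually.of_forall fun E hE => ?_)) hf
  exact Finset.sum_congr rfl fun i hi => by rw [hfg (hE.1 i hi).1, hfg (hE.1 i hi).2]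

theorem LipschitzOnWith.comp_absolutelyContinuousOnInterval {φ : X → Y} {f : ℝ → X} {s : Set X}
    {K : ℝ≥0} (hφ : LipschitzOnWith K φ s) (hf : AbsolutelyContinuousOnInterval f a b)
    (hfs : MapsTo f (uIcc a b) s) : AbsolutelyContinuousOnInterval (φ ∘ f) a b := by
  have hK := mul_zero (K : ℝ) ▸ Tendsto.const_mul (K : ℝ) hf
  refine squeeze_zero' (Eventually.of_forall fun E => Finset.sum_nonneg fun i _ => dist_nonneg)
    (eventually_inf_principal.2 (Eventually.of_forall fun E hE => ?_)) hK
  rw [Finset.mul_sum]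
  exact Finset.sum_le_sum fun i hi =>
    hφ.dist_le_mul _ (hfs (hE.1 i hi).1) _ (hfs (hE.1 i hi).2)

theorem ContDiffOn.comp_absolutelyContinuousOnInterval {φ f : ℝ → ℝ} {s : Set ℝ}
    (hφ : ContDiffOn ℝ 1 φ s) (hf : AbsolutelyContinuousOnInterval f a b)
    (hfs : MapsTo f (uIcc a b) s) : AbsolutelyContinuousOnInterval (φ ∘ f) a b := by
  have himage := ContinuousOn.image_uIcc_eq_Icc hf.continuousOn
  obtain ⟨K, hK⟩ := (hφ.mono hfs.image_subset).exists_lipschitzOnWith one_ne_zero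
    (himage ▸ convex_Icc _ _) (himage ▸ isCompact_Icc)
  exact hK.comp_absolutelyContinuousOnInterval hf (mapsTo_image f _)

theorem AbsolutelyContinuousOnInterval.sub_le_integral_of_ae_deriv_le {f φ : ℝ → ℝ}
    (hab : a ≤ b) (hf : AbsolutelyContinuousOnInterval f a b)
    (hφ : IntervalIntegrable φ volume a b) (hle : ∀ᵐ x, x ∈ uIcc a b → deriv f x ≤ φ x) :
    f b - f a ≤ ∫ x in a..b, φ x := by
  rw [← hf.integral_deriv_eq_sub]
  refine integral_mono_ae_restrict hab hf.intervalIntegrable_deriv hφ ?_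
  rw [← uIcc_of_le hab]
  filter_upwards [ae_restrict_mem measurableSet_uIcc, ae_restrict_of_ae hle] with x hx hxle
  exact hxle hx

end AbsolutelyContinuous

theorem intervalIntegrable_deriv_of_le {f f' φ : ℝ → ℝ} {a b : ℝ} (hab : a ≤ b)
    (hf : ∀ x ∈ Icc a b, HasDerivAt f (f' x) x) (hφ : IntervalIntegrable φ volume a b)
    (hle : ∀ x ∈ Icc a b, f' x ≤ φ x) : IntervalIntegrable f' volume a b := by
  set D : ℝ → ℝ := fun x => (∫ t in a..x, φ t) - f x
  have hD : MonotoneOn D (Icc a b) := by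
    intro x hx y hy hxy
    have hsub : Icc x y ⊆ Icc a b := Icc_subset_Icc hx.1 hy.2
    have hφxy : IntervalIntegrable φ volume x y :=
      hφ.mono_set (uIcc_subset_uIcc (Icc_subset_uIcc hx) (Icc_subset_uIcc hy))
    have hxy_le := sub_le_integral_of_hasDeriv_right_of_le hxy
      (fun z hz => (hf z (hsub hz)).continuousAt.continuousWithinAt)
      (fun z hz => (hf z (hsub (Ioo_subset_Icc_self hz))).hasDerivWithinAt)
      ((intervalIntegrable_iff_integrableOn_Icc_of_le hxy).1 hφxy)
      (fun z hz => hle z (hsub (Ioo_subset_Icc_self hz)))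
    have hsplit := integral_add_adjacent_intervals
      (hφ.mono_set (uIcc_subset_uIcc left_mem_uIcc (Icc_subset_uIcc hx))) hφxy
    simp only [D]
    linarith
  have hderivD : ∀ᵐ x, x ∈ Ι a b → φ x - deriv D x = f' x := by
    filter_upwards [hφ.ae_hasDerivAt_integral] with x hx hmem
    have hmem' : x ∈ uIcc a b := uIoc_subset_uIcc hmem
    rw [((hx hmem' a left_mem_uIcc).fun_sub (hf x (uIcc_of_le hab ▸ hmem'))).deriv]
    ring
  exact (hφ.sub (uIcc_of_le hab ▸ hD).intervalIntegrable_deriv).congr_ae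
    ((ae_restrict_iff' measurableSet_uIoc).2 hderivD)

theorem absolutelyContinuousOnInterval_of_hasDerivAt {f f' : ℝ → ℝ} {a b : ℝ} (hab : a ≤ b)
    (hf : ∀ x ∈ Icc a b, HasDerivAt f (f' x) x) (hf' : IntervalIntegrable f' volume a b) :
    AbsolutelyContinuousOnInterval f a b := by
  refine ((hf'.absolutelyContinuousOnInterval_intervalIntegral left_mem_uIcc).add
    (LipschitzWith.const (f a)).lipschitzOnWith.absolutelyContinuousOnInterval).congr
    fun x hx => ?_
  rw [uIcc_of_le hab] at hx
  have hax : ∀ y ∈ uIcc a x, HasDerivAt f (f' y) y := fun y hy =>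
    hf y (Icc_subset_Icc le_rfl hx.2 (uIcc_of_le hx.1 ▸ hy))
  simp only [Pi.add_apply, integral_eq_sub_of_hasDerivAt hax
    (hf'.mono_set (uIcc_subset_uIcc left_mem_uIcc (Icc_subset_uIcc hx)))]
  ring

theorem mul_exp_neg_integral_sub_le {g g' γ c : ℝ → ℝ} {a b : ℝ} (hab : a ≤ b)
    (hg : ∀ x ∈ Icc a b, HasDerivAt g (g' x) x) (hγ : IntervalIntegrable γ volume a b)
    (hc : IntervalIntegrable c volume a b) (hle : ∀ x ∈ Icc a b, g' x ≤ γ x * g x + c x) :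
    g b * exp (-∫ x in a..b, γ x) - g a ≤ ∫ x in a..b, c x * exp (-∫ y in a..x, γ y) := by
  set ν : ℝ → ℝ := fun x => exp (-∫ y in a..x, γ y)
  have hgc : ContinuousOn g (uIcc a b) := fun x hx =>
    (hg x (uIcc_of_le hab ▸ hx)).continuousAt.continuousWithinAt
  have hgAC : AbsolutelyContinuousOnInterval g a b := absolutelyContinuousOnInterval_of_hasDerivAt
    hab hg (intervalIntegrable_deriv_of_le hab hg ((hγ.mul_continuousOn hgc).add hc) hle)
  have hνAC : AbsolutelyContinuousOnInterval ν a b :=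
    contDiff_exp.contDiffOn.comp_absolutelyContinuousOnInterval
      (hγ.absolutelyContinuousOnInterval_intervalIntegral left_mem_uIcc).neg (mapsTo_univ _ _)
  have key := (hgAC.mul hνAC).sub_le_integral_of_ae_deriv_le hab
    (hc.mul_continuousOn hνAC.continuousOn) ?_
  · simpa [ν] using key
  filter_upwards [hγ.ae_hasDerivAt_integral] with x hx hmem
  have hgx := hg x (uIcc_of_le hab ▸ hmem)
  have hνx : HasDerivAt ν (ν x * -γ x) x := (hx hmem a left_mem_uIcc).fun_neg.exp
  rw [(hgx.mul hνx).deriv]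
  have := mul_le_mul_of_nonneg_right (hle x (uIcc_of_le hab ▸ hmem))
    (exp_pos (-∫ y in a..x, γ y)).le
  linarith

theorem rpow_one_sub_sub_le_integral {q A : ℝ → ℝ} {z₀ p a b : ℝ} (hab : a ≤ b) (hp : 1 ≤ p)
    (hq : IntervalIntegrable q volume a b) (hA : IntervalIntegrable A volume a b)
    (hpos : ∀ x ∈ Icc a b, 0 < z₀ + ∫ y in a..x, q y)
    (hle : ∀ x ∈ Icc a b, q x ≤ A x * (z₀ + ∫ y in a..x, q y) ^ p) :
    z₀ ^ (1 - p) - (z₀ + ∫ y in a..b, q y) ^ (1 - p) ≤ (p - 1) * ∫ x in a..b, A x := by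
  set φ : ℝ → ℝ := fun s => -(z₀ + s) ^ (1 - p)
  have hφ : ∀ s, 0 < z₀ + s → HasDerivAt φ ((p - 1) * (z₀ + s) ^ (-p)) s := by
    intro s hs
    refine (((hasDerivAt_id s).const_add z₀).rpow_const (p := 1 - p) (Or.inl hs.ne')).neg
      |>.congr_deriv ?_
    rw [show 1 - p - 1 = -p by ring, id]
    ring
  have hQ := hq.absolutelyContinuousOnInterval_intervalIntegral left_mem_uIcc
  have hAC : AbsolutelyContinuousOnInterval (φ ∘ fun x => ∫ y in a..x, q y) a b :=
    ContDiffOn.comp_absolutelyContinuousOnInterval (s := Ioi (-z₀))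
      (fun s hs => ((contDiffAt_const.add contDiffAt_id).rpow_const_of_ne
        (by simp only [mem_Ioi] at hs; simp; linarith)).neg.contDiffWithinAt)
      hQ fun x hx => by simpa [neg_lt_iff_pos_add'] using hpos x (uIcc_of_le hab ▸ hx)
  have key := hAC.sub_le_integral_of_ae_deriv_le hab (hA.const_mul (p - 1)) ?_
  · simp only [φ, Function.comp_apply, integral_same, add_zero,
      intervalIntegral.integral_const_mul] at key
    linarith
  filter_upwards [hq.ae_hasDerivAt_integral] with x hx hmem
  have hxI : x ∈ Icc a b := uIcc_of_le hab ▸ hmem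
  set z := z₀ + ∫ y in a..x, q y
  have hz : 0 < z := hpos x hxI
  rw [((hφ _ hz).comp x (hx hmem a left_mem_uIcc)).deriv]
  have : z ^ (-p) * q x ≤ A x := by
    calc z ^ (-p) * q x ≤ z ^ (-p) * (A x * z ^ p) :=
          mul_le_mul_of_nonneg_left (hle x hxI) (rpow_pos_of_pos hz _).le
      _ = A x := by rw [rpow_neg hz.le]; field_simp
  have := mul_le_mul_of_nonneg_left this (sub_nonneg.2 hp)
  linarith

theorem mul_rpow_add_mul_le {a b y n ω p : ℝ} (ha : 0 ≤ a) (hy : 0 ≤ y) (hn : 0 < n)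
    (hω : 0 ≤ ω) (hp : 1 ≤ p) (hb : b * n ^ p ≤ ω ^ p * a) :
    (a * y ^ p + b) * n ≤ a / n ^ (p - 1) * (y * n + ω) ^ p := by
  have hnp : n ^ p = n ^ (p - 1) * n := by rw [← rpow_add_one hn.ne']; ring_nf
  have hn' : 0 < n ^ (p - 1) := rpow_pos_of_pos hn _
  calc (a * y ^ p + b) * n = a / n ^ (p - 1) * (y * n) ^ p + b * n ^ p / n ^ (p - 1) := by
        rw [mul_rpow hy hn.le, hnp]; field_simp
    _ ≤ a / n ^ (p - 1) * (y * n) ^ p + ω ^ p * a / n ^ (p - 1) := by gcongr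
    _ = a / n ^ (p - 1) * ((y * n) ^ p + ω ^ p) := by ring
    _ ≤ a / n ^ (p - 1) * (y * n + ω) ^ p := by
        gcongr
        exact add_rpow_le_rpow_add (by positivity) hω hp

theorem rpow_sub_one_le_one_div_of_le {y d p : ℝ} (hy : 0 < y) (hd : 0 < d)
    (h : d ≤ y ^ (1 - p)) : y ^ (p - 1) ≤ 1 / d := by
  rw [← neg_sub, rpow_neg hy.le, ← one_div]
  exact one_div_le_one_div_of_le hd h

theorem key_estimate_thm23_general
    (g γ α β ν : ℝ → ℝ) (p ω : ℝ) (hp : 1 < p) (hω : 0 < ω)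
    (hγ : LocallyIntegrable γ) (hα : LocallyIntegrable α) (hβ : LocallyIntegrable β)
    (hαpos : ∀ t, 0 ≤ α t)
    (hg0 : ∀ t ≥ 0, 0 ≤ g t) (hgdiff : Differentiable ℝ g)
    (hineq : ∀ t ≥ 0, deriv g t ≤ γ t * g t + α t * g t ^ p + β t)
    (hν : ∀ t, ν t = Real.exp (-∫ ξ in (0:ℝ)..t, γ ξ))
    (hsmall : ∀ t ≥ 0, β t * ν t ^ p ≤ ω ^ p * α t)
    (hαν : IntegrableOn (fun ξ => α ξ / ν ξ ^ (p - 1)) (Set.Ioi (0:ℝ)))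
    (hinit : (p - 1) * (∫ ξ in Set.Ioi (0:ℝ), α ξ / ν ξ ^ (p - 1)) < (g 0 + ω) ^ (1 - p)) :
    ∀ t ≥ 0, (g t * ν t + ω) ^ (p - 1) ≤
      1 / ((g 0 + ω) ^ (1 - p) - (p - 1) * ∫ ξ in (0:ℝ)..t, α ξ / ν ξ ^ (p - 1)) := by
  intro t ht
  have hII {f : ℝ → ℝ} (hf : LocallyIntegrable f) (a b : ℝ) : IntervalIntegrable f volume a b :=
    (hf.integrableOn_isCompact isCompact_uIcc).intervalIntegrable
  have hνpos (x : ℝ) : 0 < ν x := hν x ▸ exp_pos _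
  have hνc : Continuous ν := funext hν ▸ (continuous_primitive (hII hγ) 0).neg.rexp
  set c : ℝ → ℝ := fun x => α x * g x ^ p + β x
  set A : ℝ → ℝ := fun x => α x / ν x ^ (p - 1)
  have hA (x : ℝ) : 0 ≤ A x := div_nonneg (hαpos x) (rpow_pos_of_pos (hνpos x) _).le
  have hcI (s : ℝ) : IntervalIntegrable c volume 0 s :=
    ((hII hα 0 s).mul_continuousOn (hgdiff.continuous.rpow_const
      fun _ => Or.inr (by linarith)).continuousOn).add (hII hβ 0 s)
  have hgν : ∀ s ∈ Icc 0 t, g s * ν s + ω ≤ g 0 + ω + ∫ x in 0..s, c x * ν x := by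
    intro s hs
    have := mul_exp_neg_integral_sub_le hs.1 (fun x _ => (hgdiff x).hasDerivAt) (hII hγ 0 s)
      (hcI s) fun x hx => by linarith [hineq x hx.1]
    simp only [← hν] at this
    linarith
  have hgν_pos (x : ℝ) (hx : 0 ≤ x) : 0 < g x * ν x + ω :=
    add_pos_of_nonneg_of_pos (mul_nonneg (hg0 x hx) (hνpos x).le) hω
  have hAI : IntervalIntegrable A volume 0 t :=
    (intervalIntegrable_iff_integrableOn_Ioc_of_le ht).2 (hαν.mono_set Ioc_subset_Ioi_self)
  have hbihari := rpow_one_sub_sub_le_integral ht hp.le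
    ((hcI t).mul_continuousOn hνc.continuousOn) hAI
    (fun x hx => (hgν_pos x hx.1).trans_le (hgν x hx))
    fun x hx => (mul_rpow_add_mul_le (hαpos x) (hg0 x hx.1) (hνpos x) hω.le hp.le
      (hsmall x hx.1)).trans (mul_le_mul_of_nonneg_left
        (rpow_le_rpow (hgν_pos x hx.1).le (hgν x hx) (by linarith)) (hA x))
  have hAt : ∫ x in 0..t, A x ≤ ∫ x in Ioi 0, A x := by
    rw [integral_of_le ht]
    exact setIntegral_mono_set hαν (ae_of_all _ hA) Ioc_subset_Ioi_self.eventuallyLE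
  have hD : 0 < (g 0 + ω) ^ (1 - p) - (p - 1) * ∫ x in 0..t, A x := by
    linarith [mul_le_mul_of_nonneg_left hAt (sub_nonneg.2 hp.le)]
  refine rpow_sub_one_le_one_div_of_le (hgν_pos t ht) hD ?_
  linarith [rpow_le_rpow_of_nonpos (hgν_pos t ht) (hgν t ⟨ht, le_rfl⟩) (by linarith : 1 - p ≤ 0)]

theorem key_estimate_thm23
    (g γ α β ν : ℝ → ℝ) (p ω : ℝ) (hp : 1 < p) (hω : 0 < ω)
    (hγ : LocallyIntegrable γ) (hα : LocallyIntegrable α) (hβ : LocallyIntegrable β)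
    (hαpos : ∀ t, 0 ≤ α t) (hβpos : ∀ t, 0 ≤ β t)
    (hg0 : ∀ t ≥ 0, 0 ≤ g t) (hgdiff : Differentiable ℝ g)
    (hineq : ∀ t ≥ 0, deriv g t ≤ γ t * g t + α t * g t ^ p + β t)
    (hν : ∀ t, ν t = Real.exp (-∫ ξ in (0:ℝ)..t, γ ξ))
    (hsmall : ∀ t ≥ 0, β t * ν t ^ p ≤ ω ^ p * α t)
    (hαν : IntegrableOn (fun ξ => α ξ / ν ξ ^ (p - 1)) (Set.Ioi (0:ℝ)))
    (hinit : (p - 1) * (∫ ξ in Set.Ioi (0:ℝ), α ξ / ν ξ ^ (p - 1)) < (g 0 + ω) ^ (1 - p)) :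
    ∀ t ≥ 0, (g t * ν t + ω) ^ (p - 1) ≤
      1 / ((g 0 + ω) ^ (1 - p) - (p - 1) * ∫ ξ in (0:ℝ)..t, α ξ / ν ξ ^ (p - 1)) :=
  key_estimate_thm23_general g γ α β ν p ω hp hω hγ hα hβ hαpos hg0 hgdiff hineq hν hsmall hαν hinit
end

section
/- Under the assumptions of Theorem 2.3 (the scalar version), one has the decay estimate g(t) ≤ C₂ exp(∫₀ᵗ γ(ξ)dξ) for all t ≥ 0 with C₂ = M₃^{1/(p−1)} − ω. Consequently, if ∫₀ᵗ γ(ξ)dξ → −∞ as t → ∞, then g(t) → 0 as t → ∞. -/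
/-! With `ν = exp (-∫₀ᵗ γ)`, the function `z = g ν + ω` is absolutely continuous (its factor `g`
has derivative bounded above by an integrable function) and satisfies `z' ≤ (α / ν ^ (p - 1)) z ^ p`
almost everywhere: the hypothesis `β ν ^ p ≤ ω ^ p α` lets the forcing `β` be absorbed through
`(g ν) ^ p + ω ^ p ≤ (g ν + ω) ^ p`. Integrating the Bernoulli substitution `z ^ (1 - p)` gives
`z t ^ (1 - p) ≥ (g 0 + ω) ^ (1 - p) - (p - 1) ∫₀^∞ α / ν ^ (p - 1) = 1 / M₃`, that is
`g t ν t ≤ M₃ ^ (1 / (p - 1)) - ω`. -/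

open MeasureTheory Real Filter Set

namespace AbsolutelyContinuousOnInterval

variable {a b : ℝ}

theorem congr_s5 {f g : ℝ → ℝ} (hf : AbsolutelyContinuousOnInterval f a b)
    (hfg : EqOn f g (uIcc a b)) : AbsolutelyContinuousOnInterval g a b := by
  refine hf.congr' (eventually_inf_principal.2 (Eventually.of_forall fun E hE => ?_))
  exact Finset.sum_congr rfl fun i hi => by rw [hfg (hE.1 i hi).1, hfg (hE.1 i hi).2]

theorem comp_lipschitzOnWith {f φ : ℝ → ℝ} {K : NNReal} {s : Set ℝ}
    (hφ : LipschitzOnWith K φ s) (hf : AbsolutelyContinuousOnInterval f a b)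
    (hfs : MapsTo f (uIcc a b) s) : AbsolutelyContinuousOnInterval (φ ∘ f) a b := by
  refine squeeze_zero' (Eventually.of_forall fun _ => Finset.sum_nonneg fun _ _ => dist_nonneg)
    ?_ (by simpa using Tendsto.const_mul (K : ℝ) hf)
  refine eventually_inf_principal.2 (Eventually.of_forall fun E hE => ?_)
  rw [Finset.mul_sum]
  exact Finset.sum_le_sum fun i hi =>
    hφ.dist_le_mul _ (hfs (hE.1 i hi).1) _ (hfs (hE.1 i hi).2)

theorem comp_contDiffOn {f φ : ℝ → ℝ} {s : Set ℝ} (hs : Convex ℝ s)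
    (hφ : ContDiffOn ℝ 1 φ s) (hf : AbsolutelyContinuousOnInterval f a b)
    (hfs : MapsTo f (uIcc a b) s) : AbsolutelyContinuousOnInterval (φ ∘ f) a b := by
  have hK : IsCompact (f '' uIcc a b) := isCompact_uIcc.image_of_continuousOn hf.continuousOn
  have hne : (f '' uIcc a b).Nonempty := (nonempty_uIcc).image f
  obtain ⟨m, ⟨x, hx, rfl⟩, hm⟩ := hK.exists_isLeast hne
  obtain ⟨M, ⟨y, hy, rfl⟩, hM⟩ := hK.exists_isGreatest hne
  have hsub : Icc (f x) (f y) ⊆ s := hs.ordConnected.out (hfs hx) (hfs hy)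
  obtain ⟨K, hφK⟩ :=
    (hφ.mono hsub).exists_lipschitzOnWith one_ne_zero (convex_Icc _ _) isCompact_Icc
  exact comp_lipschitzOnWith hφK hf fun t ht => ⟨hm ⟨t, ht, rfl⟩, hM ⟨t, ht, rfl⟩⟩

theorem integral_le_sub_of_le_deriv {u f : ℝ → ℝ} (hu : AbsolutelyContinuousOnInterval u a b)
    (hab : a ≤ b) (hf : IntervalIntegrable f volume a b)
    (hle : ∀ᵐ x, x ∈ uIcc a b → f x ≤ deriv u x) :
    ∫ x in a..b, f x ≤ u b - u a := by
  rw [← hu.integral_deriv_eq_sub]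
  refine intervalIntegral.integral_mono_ae_restrict hab hf hu.intervalIntegrable_deriv ?_
  rw [EventuallyLE, ae_restrict_iff' measurableSet_Icc]
  filter_upwards [hle] with x hx hxI using hx (uIcc_of_le hab ▸ hxI)

end AbsolutelyContinuousOnInterval

theorem absolutelyContinuousOnInterval_of_hasDerivAt_le {g g' φ : ℝ → ℝ} {a b : ℝ} (hab : a ≤ b)
    (hg : ∀ x ∈ Icc a b, HasDerivAt g (g' x) x) (hφ : IntervalIntegrable φ volume a b)
    (hle : ∀ x ∈ Ioo a b, g' x ≤ φ x) : AbsolutelyContinuousOnInterval g a b := by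
  have hφ' : ∀ {s t}, s ∈ Icc a b → t ∈ Icc a b → IntervalIntegrable φ volume s t :=
    fun hs ht => hφ.mono_set (uIcc_subset_uIcc (uIcc_of_le hab ▸ hs) (uIcc_of_le hab ▸ ht))
  set ψ : ℝ → ℝ := fun x => (∫ t in a..x, φ t) - g x
  -- `g'` is not integrable a priori, but `ψ` is monotone and `ψ' = φ - g'` almost everywhere.
  have hψ : MonotoneOn ψ (uIcc a b) := by
    rw [uIcc_of_le hab]
    intro s hs t ht hst
    have hgst : g t - g s ≤ ∫ x in s..t, φ x :=
      intervalIntegral.sub_le_integral_of_hasDeriv_right_of_le hst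
        (fun x hx => (hg x ⟨hs.1.trans hx.1, hx.2.trans ht.2⟩).continuousAt.continuousWithinAt)
        (fun x hx => (hg x ⟨hs.1.trans hx.1.le, hx.2.le.trans ht.2⟩).hasDerivWithinAt)
        ((intervalIntegrable_iff_integrableOn_Icc_of_le hst).1 (hφ' hs ht))
        (fun x hx => hle x ⟨hs.1.trans_lt hx.1, hx.2.trans_le ht.2⟩)
    have := intervalIntegral.integral_add_adjacent_intervals
      (hφ' (left_mem_Icc.2 hab) hs) (hφ' hs ht)
    simp only [ψ]
    linarith
  have hg' : IntervalIntegrable g' volume a b := by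
    refine (hφ.sub hψ.intervalIntegrable_deriv).congr_ae ?_
    rw [EventuallyEq, ae_restrict_iff' measurableSet_uIoc]
    filter_upwards [hφ.ae_hasDerivAt_integral] with x hx hxI
    have hxI' : x ∈ Icc a b := uIcc_of_le hab ▸ uIoc_subset_uIcc hxI
    have hd : deriv ψ x = φ x - g' x :=
      ((hx (uIoc_subset_uIcc hxI) a left_mem_uIcc).sub (hg x hxI')).deriv
    show φ x - deriv ψ x = g' x
    rw [hd, sub_sub_cancel]
  have hconst := ((LipschitzWith.const (g a)).lipschitzOnWith (s := uIcc a b))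
  refine (hconst.absolutelyContinuousOnInterval.add
    (hg'.absolutelyContinuousOnInterval_intervalIntegral left_mem_uIcc)).congr_s5 fun x hx => ?_
  have := intervalIntegral.integral_eq_sub_of_hasDerivAt
    (fun y hy => hg y (uIcc_subset_Icc (left_mem_Icc.2 hab) (uIcc_of_le hab ▸ hx) hy))
    (hg'.mono_set (uIcc_subset_uIcc left_mem_uIcc hx))
  simp only [Pi.add_apply]
  linarith

theorem AbsolutelyContinuousOnInterval.rpow_one_sub_sub_le {z c : ℝ → ℝ} {a b p : ℝ}
    (hz : AbsolutelyContinuousOnInterval z a b) (hab : a ≤ b) (hp : 1 ≤ p)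
    (hzpos : ∀ x ∈ uIcc a b, 0 < z x) (hc : IntervalIntegrable c volume a b)
    (hderiv : ∀ᵐ x, x ∈ uIcc a b → deriv z x ≤ c x * z x ^ p) :
    z a ^ (1 - p) - (p - 1) * ∫ x in a..b, c x ≤ z b ^ (1 - p) := by
  have hW : AbsolutelyContinuousOnInterval (fun x => z x ^ (1 - p)) a b :=
    hz.comp_contDiffOn (φ := fun y => y ^ (1 - p)) (convex_Ioi 0)
      (fun y hy => (contDiffAt_rpow_const_of_ne (ne_of_gt hy)).contDiffWithinAt) hzpos
  have key := hW.integral_le_sub_of_le_deriv hab (hc.const_mul (1 - p)) ?_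
  · rw [intervalIntegral.integral_const_mul] at key
    linarith
  filter_upwards [hz.ae_differentiableAt, hderiv] with x hdiff hx hxI
  have hzx := hzpos x hxI
  rw [((hdiff hxI).hasDerivAt.rpow_const (Or.inl hzx.ne')).deriv]
  have hcancel : z x ^ p * z x ^ (1 - p - 1) = 1 := by
    rw [← rpow_add hzx, show p + (1 - p - 1) = 0 by ring, rpow_zero]
  calc (1 - p) * c x = (1 - p) * (c x * z x ^ p) * z x ^ (1 - p - 1) := by
        rw [mul_assoc, mul_assoc, hcancel, mul_one]
    _ ≤ (1 - p) * deriv z x * z x ^ (1 - p - 1) := by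
        gcongr ?_ * _
        exact mul_le_mul_of_nonpos_left (hx hxI) (by linarith)
    _ = deriv z x * (1 - p) * z x ^ (1 - p - 1) := by ring

theorem mul_rpow_add_mul_le_s5 {A B G ν ω p : ℝ} (hp : 1 ≤ p) (hA : 0 ≤ A) (hG : 0 ≤ G)
    (hν : 0 < ν) (hω : 0 ≤ ω) (hB : B * ν ^ p ≤ ω ^ p * A) :
    (A * G ^ p + B) * ν ≤ A / ν ^ (p - 1) * (G * ν + ω) ^ p := by
  have hνp : ν ^ p = ν ^ (p - 1) * ν := by rw [← rpow_add_one hν.ne', sub_add_cancel]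
  have hνp1 : 0 < ν ^ (p - 1) := rpow_pos_of_pos hν _
  calc (A * G ^ p + B) * ν = (A * (G * ν) ^ p + B * ν ^ p) / ν ^ (p - 1) := by
        rw [mul_rpow hG hν.le, hνp]
        field_simp
    _ ≤ (A * (G * ν) ^ p + ω ^ p * A) / ν ^ (p - 1) := by gcongr
    _ = A / ν ^ (p - 1) * ((G * ν) ^ p + ω ^ p) := by ring
    _ ≤ A / ν ^ (p - 1) * (G * ν + ω) ^ p := by
        gcongr
        exact add_rpow_le_rpow_add (by positivity) hω hp

theorem le_one_div_rpow_of_le_rpow_one_sub {y μ p : ℝ} (hy : 0 < y) (hμ : 0 < μ) (hp : 1 < p)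
    (h : μ ≤ y ^ (1 - p)) : y ≤ (1 / μ) ^ (1 / (p - 1)) := by
  have hp1 : 0 < p - 1 := by linarith
  rw [← rpow_le_rpow_iff hy.le (by positivity) hp1, one_div (p - 1),
    rpow_inv_rpow (by positivity) hp1.ne', le_one_div (by positivity) hμ, one_div,
    ← rpow_neg hy.le, neg_sub]
  exact h

theorem bernoulli_estimate {g γ α β : ℝ → ℝ} {p ω T : ℝ} (hp : 1 ≤ p) (hω : 0 < ω)
    (hγ : LocallyIntegrable γ) (hα : LocallyIntegrable α) (hβ : LocallyIntegrable β)
    (hαpos : ∀ t ≥ 0, 0 ≤ α t) (hg0 : ∀ t ≥ 0, 0 ≤ g t) (hgdiff : Differentiable ℝ g)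
    (hineq : ∀ t ≥ 0, deriv g t ≤ γ t * g t + α t * g t ^ p + β t)
    (hsmall : ∀ t ≥ 0, β t * exp (-∫ ξ in (0:ℝ)..t, γ ξ) ^ p ≤ ω ^ p * α t) (hT : 0 ≤ T)
    (hc : IntervalIntegrable (fun t => α t / exp (-∫ ξ in (0:ℝ)..t, γ ξ) ^ (p - 1)) volume 0 T) :
    (g 0 + ω) ^ (1 - p) - (p - 1) * ∫ t in (0:ℝ)..T, α t / exp (-∫ ξ in (0:ℝ)..t, γ ξ) ^ (p - 1)
      ≤ (g T * exp (-∫ ξ in (0:ℝ)..T, γ ξ) + ω) ^ (1 - p) := by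
  set F : ℝ → ℝ := fun t => ∫ ξ in (0:ℝ)..t, γ ξ
  set z : ℝ → ℝ := fun t => g t * exp (-F t) + ω
  have hii : ∀ {f : ℝ → ℝ}, LocallyIntegrable f → IntervalIntegrable f volume 0 T :=
    fun hf => (hf.integrableOn_isCompact isCompact_uIcc).intervalIntegrable
  have hgc := hgdiff.continuous
  have hφ : IntervalIntegrable (fun t => γ t * g t + α t * g t ^ p + β t) volume 0 T :=
    (((hii hγ).mul_continuousOn hgc.continuousOn).add ((hii hα).mul_continuousOn
      (hgc.rpow_const fun _ => Or.inr (by linarith)).continuousOn)).add (hii hβ)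
  have hgAC : AbsolutelyContinuousOnInterval g 0 T :=
    absolutelyContinuousOnInterval_of_hasDerivAt_le hT (fun x _ => (hgdiff x).hasDerivAt) hφ
      fun x hx => hineq x hx.1.le
  have hνAC : AbsolutelyContinuousOnInterval (fun t => exp (-F t)) 0 T :=
    ((hii hγ).absolutelyContinuousOnInterval_intervalIntegral left_mem_uIcc).neg.comp_contDiffOn
      (φ := exp) convex_univ contDiff_exp.contDiffOn (mapsTo_univ _ _)
  have hzAC : AbsolutelyContinuousOnInterval z 0 T :=
    (hgAC.mul hνAC).add (LipschitzWith.const ω).lipschitzOnWith.absolutelyContinuousOnInterval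
  have hzpos : ∀ x ∈ uIcc 0 T, 0 < z x := fun x hx => by
    have hx0 : 0 ≤ x := (uIcc_of_le hT ▸ hx).1
    exact add_pos_of_nonneg_of_pos (mul_nonneg (hg0 x hx0) (exp_pos _).le) hω
  have key := hzAC.rpow_one_sub_sub_le hT hp hzpos hc ?_
  · simpa [z, F] using key
  filter_upwards [LocallyIntegrable.ae_hasDerivAt_integral hγ] with x hFx hx
  have hx0 : 0 ≤ x := (uIcc_of_le hT ▸ hx).1
  have hdz : HasDerivAt z ((deriv g x - γ x * g x) * exp (-F x)) x :=
    (((hgdiff x).hasDerivAt.mul (hFx 0).fun_neg.exp).add_const ω).congr_deriv (by ring)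
  rw [hdz.deriv]
  calc (deriv g x - γ x * g x) * exp (-F x) ≤ (α x * g x ^ p + β x) * exp (-F x) := by
        gcongr
        linarith [hineq x hx0]
    _ ≤ _ := mul_rpow_add_mul_le_s5 hp (hαpos x hx0) (hg0 x hx0) (exp_pos _) hω.le (hsmall x hx0)

theorem decay_estimate_thm23_general
    (g γ α β ν : ℝ → ℝ) (p ω : ℝ) (hp : 1 < p) (hω : 0 < ω)
    (hγ : LocallyIntegrable γ) (hα : LocallyIntegrable α) (hβ : LocallyIntegrable β)
    (hαpos : ∀ t, 0 ≤ α t)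
    (hg0 : ∀ t ≥ 0, 0 ≤ g t) (hgdiff : Differentiable ℝ g)
    (hineq : ∀ t ≥ 0, deriv g t ≤ γ t * g t + α t * g t ^ p + β t)
    (hν : ∀ t, ν t = Real.exp (-∫ ξ in (0:ℝ)..t, γ ξ))
    (hsmall : ∀ t ≥ 0, β t * ν t ^ p ≤ ω ^ p * α t)
    (hαν : IntegrableOn (fun ξ => α ξ / ν ξ ^ (p - 1)) (Set.Ioi (0:ℝ)))
    (hinit : (p - 1) * (∫ ξ in Set.Ioi (0:ℝ), α ξ / ν ξ ^ (p - 1)) < (g 0 + ω) ^ (1 - p)) :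
    (∀ t ≥ 0, g t ≤
      ((1 / ((g 0 + ω) ^ (1 - p) - (p - 1) * ∫ ξ in Set.Ioi (0:ℝ), α ξ / ν ξ ^ (p - 1)))
        ^ (1 / (p - 1)) - ω) * Real.exp (∫ ξ in (0:ℝ)..t, γ ξ)) ∧
    (Tendsto (fun t => ∫ ξ in (0:ℝ)..t, γ ξ) atTop atBot →
      Tendsto g atTop (nhds 0)) := by
  obtain rfl : ν = fun t => exp (-∫ ξ in (0:ℝ)..t, γ ξ) := funext hν
  set c := fun t => α t / exp (-∫ ξ in (0:ℝ)..t, γ ξ) ^ (p - 1)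
  set μ := (g 0 + ω) ^ (1 - p) - (p - 1) * ∫ t in Ioi (0:ℝ), c t
  have hbound : ∀ t ≥ 0, g t ≤ ((1 / μ) ^ (1 / (p - 1)) - ω) * exp (∫ ξ in (0:ℝ)..t, γ ξ) := by
    intro t ht
    have hct : ∫ ξ in (0:ℝ)..t, c ξ ≤ ∫ ξ in Ioi (0:ℝ), c ξ := by
      rw [intervalIntegral.integral_of_le ht]
      exact setIntegral_mono_set hαν (ae_of_all _ fun ξ => div_nonneg (hαpos ξ) (by positivity))
        Ioc_subset_Ioi_self.eventuallyLE
    have hbern := bernoulli_estimate hp.le hω hγ hα hβ (fun t _ => hαpos t) hg0 hgdiff hineq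
      hsmall ht ((intervalIntegrable_iff_integrableOn_Ioc_of_le ht).2
        (hαν.mono_set Ioc_subset_Ioi_self))
    have hμ : μ ≤ (g t * exp (-∫ ξ in (0:ℝ)..t, γ ξ) + ω) ^ (1 - p) := by
      have := mul_le_mul_of_nonneg_left hct (sub_nonneg.2 hp.le)
      linarith
    have hz := le_one_div_rpow_of_le_rpow_one_sub
      (add_pos_of_nonneg_of_pos (mul_nonneg (hg0 t ht) (exp_pos _).le) hω) (by linarith) hp hμ
    calc g t = g t * exp (-∫ ξ in (0:ℝ)..t, γ ξ) * exp (∫ ξ in (0:ℝ)..t, γ ξ) := by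
          rw [mul_assoc, ← exp_add, neg_add_cancel, exp_zero, mul_one]
      _ ≤ _ := by gcongr; linarith
  refine ⟨hbound, fun hγbot => ?_⟩
  refine squeeze_zero' (eventually_atTop.2 ⟨0, hg0⟩) (eventually_atTop.2 ⟨0, hbound⟩) ?_
  simpa using (tendsto_exp_atBot.comp hγbot).const_mul ((1 / μ) ^ (1 / (p - 1)) - ω)

theorem decay_estimate_thm23
    (g γ α β ν : ℝ → ℝ) (p ω : ℝ) (hp : 1 < p) (hω : 0 < ω)
    (hγ : LocallyIntegrable γ) (hα : LocallyIntegrable α) (hβ : LocallyIntegrable β)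
    (hαpos : ∀ t, 0 ≤ α t) (hβpos : ∀ t, 0 ≤ β t)
    (hg0 : ∀ t ≥ 0, 0 ≤ g t) (hgdiff : Differentiable ℝ g)
    (hineq : ∀ t ≥ 0, deriv g t ≤ γ t * g t + α t * g t ^ p + β t)
    (hν : ∀ t, ν t = Real.exp (-∫ ξ in (0:ℝ)..t, γ ξ))
    (hsmall : ∀ t ≥ 0, β t * ν t ^ p ≤ ω ^ p * α t)
    (hαν : IntegrableOn (fun ξ => α ξ / ν ξ ^ (p - 1)) (Set.Ioi (0:ℝ)))
    (hinit : (p - 1) * (∫ ξ in Set.Ioi (0:ℝ), α ξ / ν ξ ^ (p - 1)) < (g 0 + ω) ^ (1 - p)) :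
    (∀ t ≥ 0, g t ≤
      ((1 / ((g 0 + ω) ^ (1 - p) - (p - 1) * ∫ ξ in Set.Ioi (0:ℝ), α ξ / ν ξ ^ (p - 1)))
        ^ (1 / (p - 1)) - ω) * Real.exp (∫ ξ in (0:ℝ)..t, γ ξ)) ∧
    (Tendsto (fun t => ∫ ξ in (0:ℝ)..t, γ ξ) atTop atBot →
      Tendsto g atTop (nhds 0)) :=
  decay_estimate_thm23_general g γ α β ν p ω hp hω hγ hα hβ hαpos hg0 hgdiff hineq hν hsmall hαν
    hinit
end

section
/- Let g : [0,T] → [0,∞) be differentiable with g' ≤ γ(t)g + α(t)g^p + β(t), p > 1, α, β ≥ 0, and suppose g(0) > 0. Define ν(t) = exp(−∫₀ᵗ γ) and ζ(t) = [g(0) + ∫₀ᵗ β(ξ)ν(ξ)dξ]/ν(t). If q > 1 and α(t) ≤ (q−1)β(t)/(q ζ(t))^p for all t ∈ [0,T], then g(t) < q ζ(t) for all t ∈ (0,T]. -/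
open MeasureTheory intervalIntegral Real

set_option maxHeartbeats 2000000 in
theorem comparison_lemma_thm24
    (g γ α β ν ζ : ℝ → ℝ) (p q T : ℝ) (hp : 1 < p) (hq : 1 < q) (hT : 0 < T)
    (hγ : LocallyIntegrable γ) (hα : LocallyIntegrable α) (hβ : LocallyIntegrable β)
    (hαpos : ∀ t, 0 ≤ α t) (hβpos : ∀ t, 0 ≤ β t)
    (hg0 : ∀ t ∈ Set.Icc (0:ℝ) T, 0 ≤ g t) (hgpos : 0 < g 0)
    (hgdiff : Differentiable ℝ g)
    (hineq : ∀ t ∈ Set.Icc (0:ℝ) T, deriv g t ≤ γ t * g t + α t * g t ^ p + β t)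
    (hν : ∀ t, ν t = Real.exp (-∫ ξ in (0:ℝ)..t, γ ξ))
    (hζ : ∀ t, ζ t = (g 0 + ∫ ξ in (0:ℝ)..t, β ξ * ν ξ) / ν t)
    (hαζ : ∀ t ∈ Set.Icc (0:ℝ) T, α t ≤ (q - 1) * β t / (q * ζ t) ^ p) :
    ∀ t ∈ Set.Ioc (0:ℝ) T, g t < q * ζ t := by
  have hq0 : (0:ℝ) < q := lt_trans one_pos hq
  have hIγ : ∀ a b : ℝ, IntervalIntegrable γ volume a b := fun a b =>
    (hγ.integrableOn_isCompact isCompact_uIcc).intervalIntegrable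
  have hIβ : ∀ a b : ℝ, IntervalIntegrable β volume a b := fun a b =>
    (hβ.integrableOn_isCompact isCompact_uIcc).intervalIntegrable
  have hgcont : Continuous g := hgdiff.continuous
  obtain ⟨V, hVdef⟩ : ∃ V : ℝ → ℝ, V = fun t => ∫ ξ in (0:ℝ)..t, γ ξ := ⟨_, rfl⟩
  have hVcont : Continuous V := by
    rw [hVdef]; exact intervalIntegral.continuous_primitive hIγ 0
  have hνx : ∀ t, ν t = Real.exp (-V t) := by simp only [hVdef]; exact hν
  have hνcont : Continuous ν := by
    have hh : ν = fun t => Real.exp (-V t) := funext hνx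
    rw [hh]; exact Real.continuous_exp.comp hVcont.neg
  have hνpos : ∀ t, 0 < ν t := fun t => by rw [hνx t]; exact Real.exp_pos _
  have hIβν : ∀ a b : ℝ, IntervalIntegrable (fun ξ => β ξ * ν ξ) volume a b := fun a b =>
    (hIβ a b).mul_continuousOn hνcont.continuousOn
  obtain ⟨B, hBdef⟩ : ∃ B : ℝ → ℝ, B = fun t => ∫ ξ in (0:ℝ)..t, β ξ * ν ξ := ⟨_, rfl⟩
  have hBcont : Continuous B := by
    rw [hBdef]; exact intervalIntegral.continuous_primitive hIβν 0
  have hζx : ∀ t, ζ t = (g 0 + B t) / ν t := by simp only [hBdef]; exact hζ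
  have hζν : ∀ t, q * ζ t * ν t = q * (g 0 + B t) := by
    intro t
    rw [hζx t]
    field_simp
    rw [mul_div_assoc, div_self (hνpos t).ne', mul_one]
  have hBnn : ∀ t, 0 ≤ t → 0 ≤ B t := by
    intro t ht
    simp only [hBdef]
    exact intervalIntegral.integral_nonneg ht fun ξ _ => mul_nonneg (hβpos ξ) (hνpos ξ).le
  have hζpos : ∀ t, 0 ≤ t → 0 < ζ t := fun t ht => by
    rw [hζx t]; exact div_pos (by linarith [hBnn t ht]) (hνpos t)
  have hζcont : Continuous ζ := by
    have hh : ζ = fun t => (g 0 + B t) / ν t := funext hζx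
    rw [hh]
    exact (continuous_const.add hBcont).div hνcont fun t => (hνpos t).ne'
  have hIw : ∀ a b : ℝ, IntervalIntegrable (fun ξ => |γ ξ| + β ξ) volume a b := fun a b =>
    ((hIγ a b).abs).add (hIβ a b)
  obtain ⟨W, hWdef⟩ : ∃ W : ℝ → ℝ, W = fun t => ∫ ξ in (0:ℝ)..t, (|γ ξ| + β ξ) := ⟨_, rfl⟩
  have hWcont : Continuous W := by
    rw [hWdef]; exact intervalIntegral.continuous_primitive hIw 0
  have hWadd : ∀ s t : ℝ, W t - W s = ∫ ξ in s..t, (|γ ξ| + β ξ) := by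
    intro s t
    simp only [hWdef]
    have hh : (∫ ξ in (0:ℝ)..s, (|γ ξ| + β ξ)) + ∫ ξ in s..t, (|γ ξ| + β ξ)
        = ∫ ξ in (0:ℝ)..t, (|γ ξ| + β ξ) :=
      intervalIntegral.integral_add_adjacent_intervals (hIw 0 s) (hIw s t)
    linarith
  have hWmono : Monotone W := fun s t hst => by
    have h1 := hWadd s t
    have h2 : 0 ≤ ∫ ξ in s..t, (|γ ξ| + β ξ) :=
      intervalIntegral.integral_nonneg hst fun ξ _ => add_nonneg (abs_nonneg _) (hβpos ξ)
    linarith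
  have hW0 : W 0 = 0 := by simp only [hWdef]; exact intervalIntegral.integral_same
  have hWT : 0 ≤ W T := hW0 ▸ hWmono hT.le
  -- bounds on g and ν over [0, T]
  obtain ⟨Mg0, hMg0⟩ := (isCompact_Icc : IsCompact (Set.Icc (0:ℝ) T)).exists_bound_of_continuousOn
    hgcont.continuousOn
  obtain ⟨Mν0, hMν0⟩ := (isCompact_Icc : IsCompact (Set.Icc (0:ℝ) T)).exists_bound_of_continuousOn
    hνcont.continuousOn
  obtain ⟨Mg, hMgdef⟩ : ∃ M : ℝ, M = max Mg0 1 := ⟨_, rfl⟩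
  obtain ⟨Mν, hMνdef⟩ : ∃ M : ℝ, M = max Mν0 1 := ⟨_, rfl⟩
  have hMg : ∀ t ∈ Set.Icc (0:ℝ) T, |g t| ≤ Mg := by
    intro t ht
    have h1 := hMg0 t ht; rw [Real.norm_eq_abs] at h1
    rw [hMgdef]
    exact le_trans h1 (le_max_left _ _)
  have hMν : ∀ t ∈ Set.Icc (0:ℝ) T, ν t ≤ Mν := by
    intro t ht
    have h1 := hMν0 t ht; rw [Real.norm_eq_abs] at h1
    rw [hMνdef]
    exact le_trans (le_trans (le_abs_self _) h1) (le_max_left _ _)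
  have hMg1 : (1:ℝ) ≤ Mg := by rw [hMgdef]; exact le_max_right _ _
  have hMν1 : (1:ℝ) ≤ Mν := by rw [hMνdef]; exact le_max_right _ _
  have hMgnn : (0:ℝ) ≤ Mg := by linarith
  have hMνnn : (0:ℝ) ≤ Mν := by linarith
  -- the constants
  have hWT1 : (0:ℝ) < 1 + W T := by linarith
  obtain ⟨ε, hεdef⟩ : ∃ e : ℝ, e = (q - 1) * g 0 / (2 * (1 + W T)) := ⟨_, rfl⟩
  have hε : 0 < ε := by
    rw [hεdef]; exact div_pos (mul_pos (by linarith) hgpos) (by linarith)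
  have hεT : ε * (1 + W T) = (q - 1) * g 0 / 2 := by
    rw [hεdef]
    field_simp
  obtain ⟨C, hCdef⟩ : ∃ c : ℝ, c = 3 * Mg * Mν + Mν + q := ⟨_, rfl⟩
  have hMgp : (0:ℝ) < Mg := lt_of_lt_of_le one_pos hMg1
  have hMνp : (0:ℝ) < Mν := lt_of_lt_of_le one_pos hMν1
  have hC : 0 < C := by
    rw [hCdef]
    have h1 : (0:ℝ) < 3 * Mg * Mν := mul_pos (mul_pos (by norm_num) hMgp) hMνp
    linarith
  obtain ⟨η, hηdef⟩ : ∃ e : ℝ, e = min 1 (ε / C) := ⟨_, rfl⟩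
  have hη : 0 < η := by rw [hηdef]; exact lt_min one_pos (div_pos hε hC)
  have hη1 : η ≤ 1 := by rw [hηdef]; exact min_le_left _ _
  have hηC : η * C ≤ ε := by
    have h1 : η ≤ ε / C := by rw [hηdef]; exact min_le_right _ _
    calc η * C ≤ (ε / C) * C := mul_le_mul_of_nonneg_right h1 hC.le
      _ = ε := div_mul_cancel₀ _ hC.ne'
  obtain ⟨h, hhdef⟩ : ∃ h : ℝ → ℝ, h = fun t => g t * ν t - g 0 - q * B t := ⟨_, rfl⟩
  have hhcont : Continuous h := by
    rw [hhdef]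
    exact ((hgcont.mul hνcont).sub continuous_const).sub (continuous_const.mul hBcont)
  set S := {t : ℝ | h t ≤ ε * (1 + W t)} with hSdef
  -- the derivative bound in the good region
  have hkey : ∀ ξ ∈ Set.Icc (0:ℝ) T, g ξ ≤ q * ζ ξ → deriv g ξ ≤ γ ξ * g ξ + q * β ξ := by
    intro ξ hξ hle
    have h1 := hineq ξ hξ
    have hqζ : 0 < q * ζ ξ := mul_pos hq0 (hζpos ξ hξ.1)
    have hqζp : 0 < (q * ζ ξ) ^ p := Real.rpow_pos_of_pos hqζ p
    have h2 : α ξ * g ξ ^ p ≤ (q - 1) * β ξ := by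
      calc α ξ * g ξ ^ p ≤ α ξ * (q * ζ ξ) ^ p :=
            mul_le_mul_of_nonneg_left (Real.rpow_le_rpow (hg0 ξ hξ) hle (by linarith)) (hαpos ξ)
        _ ≤ ((q - 1) * β ξ / (q * ζ ξ) ^ p) * (q * ζ ξ) ^ p :=
            mul_le_mul_of_nonneg_right (hαζ ξ hξ) hqζp.le
        _ = (q - 1) * β ξ := div_mul_cancel₀ _ hqζp.ne'
    linarith
  -- membership in S gives the strict inequality
  have hSlt : ∀ x ∈ Set.Icc (0:ℝ) T, x ∈ S → g x < q * ζ x := by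
    intro x hx hxS
    have h1 : h x ≤ ε * (1 + W x) := hxS
    have h2 : ε * (1 + W x) ≤ ε * (1 + W T) :=
      mul_le_mul_of_nonneg_left (by linarith [hWmono hx.2]) hε.le
    have h3 : h x < (q - 1) * g 0 := by
      rw [hεT] at h2
      have h9 : (0:ℝ) < (q - 1) * g 0 := mul_pos (by linarith) hgpos
      linarith
    have h4 : g x * ν x < q * ζ x * ν x := by
      rw [hζν x]
      simp only [hhdef] at h3
      linarith
    exact lt_of_mul_lt_mul_right h4 (hνpos x).le
  -- main continuous induction
  have main : Set.Icc (0:ℝ) T ⊆ S := by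
    apply IsClosed.Icc_subset_of_forall_exists_gt
    · exact ((isClosed_le (hhcont) (continuous_const.mul (continuous_const.add hWcont)))).inter
        isClosed_Icc
    · show h 0 ≤ ε * (1 + W 0)
      have hν0 : ν 0 = 1 := by
        rw [hνx 0]
        have hh : V 0 = 0 := by simp only [hVdef]; exact intervalIntegral.integral_same
        rw [hh]; simp
      have hB0 : B 0 = 0 := by simp only [hBdef]; exact intervalIntegral.integral_same
      simp only [hhdef, hν0, hB0, hW0]
      linarith
    · rintro x ⟨hxS, hx0, hxT⟩ y hy
      have hgx : g x < q * ζ x := hSlt x ⟨hx0, hxT.le⟩ hxS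
      -- eventual smallness near x
      have ebound : ∀ (f : ℝ → ℝ), Continuous f → ∀ c : ℝ, 0 < c →
          ∀ᶠ ξ in nhds x, |f ξ - f x| ≤ c := by
        intro f hf c hc
        have h2 := (hf.continuousAt (x := x)).eventually (Metric.closedBall_mem_nhds (f x) hc)
        filter_upwards [h2] with ξ hξ
        simpa [Metric.mem_closedBall, Real.dist_eq] using hξ
      have e1 : ∀ᶠ ξ in nhds x, g ξ < q * ζ ξ :=
        hgcont.continuousAt.eventually_lt (continuous_const.mul hζcont).continuousAt hgx
      have e2 := ebound g hgcont η hη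
      have e3 := ebound ν hνcont (η / 2) (by linarith)
      have e4 := ebound W hWcont η hη
      obtain ⟨δ, hδ, hδP⟩ := Metric.eventually_nhds_iff.mp (e1.and (e2.and (e3.and e4)))
      obtain ⟨z, hzdef⟩ : ∃ z : ℝ, z = min (min y T) (x + δ / 2) := ⟨_, rfl⟩
      have hxz : x < z := by
        rw [hzdef]; exact lt_min (lt_min hy hxT) (by linarith)
      have hzT : z ≤ T := by
        rw [hzdef]; exact le_trans (min_le_left _ _) (min_le_right _ _)
      have hzy : z ≤ y := by
        rw [hzdef]; exact le_trans (min_le_left _ _) (min_le_left _ _)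
      have hzd : z ≤ x + δ / 2 := by rw [hzdef]; exact min_le_right _ _
      have hP : ∀ ξ ∈ Set.Icc x z,
          g ξ < q * ζ ξ ∧ |g ξ - g x| ≤ η ∧ |ν ξ - ν x| ≤ η / 2 ∧ |W ξ - W x| ≤ η := by
        intro ξ hξ
        apply hδP
        rw [Real.dist_eq, abs_of_nonneg (by linarith [hξ.1])]
        linarith [hξ.2]
      have hsub : Set.Icc x z ⊆ Set.Icc (0:ℝ) T := fun ξ hξ =>
        ⟨by linarith [hξ.1], by linarith [hξ.2]⟩
      -- integral quantities on [x, z]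
      obtain ⟨r, hrdef⟩ : ∃ c : ℝ, c = ∫ ξ in x..z, γ ξ := ⟨_, rfl⟩
      obtain ⟨A, hAdef⟩ : ∃ c : ℝ, c = ∫ ξ in x..z, γ ξ * g ξ := ⟨_, rfl⟩
      obtain ⟨Iγ, hIγdef⟩ : ∃ c : ℝ, c = ∫ ξ in x..z, |γ ξ| := ⟨_, rfl⟩
      obtain ⟨Ib, hIbdef⟩ : ∃ c : ℝ, c = ∫ ξ in x..z, β ξ := ⟨_, rfl⟩
      obtain ⟨Jβ, hJdef⟩ : ∃ c : ℝ, c = ∫ ξ in x..z, β ξ * ν ξ := ⟨_, rfl⟩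
      have hIγg : IntervalIntegrable (fun ξ => γ ξ * g ξ) volume x z :=
        (hIγ x z).mul_continuousOn hgcont.continuousOn
      have hIγnn : 0 ≤ Iγ := by
        rw [hIγdef]
        exact intervalIntegral.integral_nonneg hxz.le fun ξ _ => abs_nonneg _
      have hIbnn : 0 ≤ Ib := by
        rw [hIbdef]
        exact intervalIntegral.integral_nonneg hxz.le fun ξ _ => hβpos ξ
      have hWzx : W z - W x = Iγ + Ib := by
        rw [hWadd x z, intervalIntegral.integral_add ((hIγ x z).abs) (hIβ x z),
          ← hIγdef, ← hIbdef]
      have hWη : W z - W x ≤ η :=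
        le_trans (le_abs_self _) ((hP z ⟨hxz.le, le_refl z⟩).2.2.2)
      have hIγη : Iγ ≤ η := by linarith
      have hIbη : Ib ≤ η := by linarith
      have hrIγ : |r| ≤ Iγ := by
        rw [hrdef, hIγdef]
        exact intervalIntegral.abs_integral_le_integral_abs hxz.le
      have hrη : |r| ≤ η := le_trans hrIγ hIγη
      -- one-sided FTC
      have hFTC : g z - g x ≤ A + q * Ib := by
        have hint : IntegrableOn (fun ξ => γ ξ * g ξ + q * β ξ) (Set.Icc x z) := by
          apply Integrable.add
          · exact (hγ.integrableOn_isCompact isCompact_Icc).mul_continuousOn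
              hgcont.continuousOn isCompact_Icc
          · exact ((hβ.integrableOn_isCompact isCompact_Icc)).const_mul q
        have h1 := intervalIntegral.sub_le_integral_of_hasDeriv_right_of_le hxz.le
          hgcont.continuousOn
          (fun ξ _ => (hgdiff ξ).hasDerivAt.hasDerivWithinAt)
          hint
          (fun ξ hξ => hkey ξ (hsub ⟨hξ.1.le, hξ.2.le⟩) ((hP ξ ⟨hξ.1.le, hξ.2.le⟩).1.le))
        calc g z - g x ≤ ∫ ξ in x..z, (γ ξ * g ξ + q * β ξ) := h1
          _ = A + q * Ib := by
            rw [intervalIntegral.integral_add hIγg ((hIβ x z).const_mul q),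
              intervalIntegral.integral_const_mul, ← hAdef, ← hIbdef]
      -- exponential estimates
      have hVzx : V z = V x + r := by
        simp only [hVdef, hrdef]
        have h1 : (∫ ξ in (0:ℝ)..x, γ ξ) + ∫ ξ in x..z, γ ξ = ∫ ξ in (0:ℝ)..z, γ ξ :=
          intervalIntegral.integral_add_adjacent_intervals (hIγ 0 x) (hIγ x z)
        linarith
      have hνz : ν z = ν x * Real.exp (-r) := by
        rw [hνx z, hνx x, ← Real.exp_add, hVzx]; ring_nf
      have habs1 : |Real.exp (-r) - 1 - (-r)| ≤ (-r) ^ 2 :=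
        Real.abs_exp_sub_one_sub_id_le (by rw [abs_neg]; exact le_trans hrη hη1)
      have hr2 : r ^ 2 ≤ η * Iγ := by
        calc r ^ 2 = |r| * |r| := by rw [← sq_abs]; ring
          _ ≤ η * Iγ := mul_le_mul hrη hrIγ (abs_nonneg r) hη.le
      have hr2' : r ^ 2 ≤ η := by
        calc r ^ 2 = |r| * |r| := by rw [← sq_abs]; ring
          _ ≤ η * 1 := mul_le_mul hrη (le_trans hrη hη1) (abs_nonneg r) hη.le
          _ = η := mul_one η
      have hexp1 : Real.exp (-r) ≤ 1 - r + η * Iγ := by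
        have h2 := (abs_le.mp habs1).2
        linarith
      have hexp2 : |Real.exp (-r) - 1| ≤ 2 * η := by
        have h2 := abs_le.mp habs1
        have h3 := abs_le.mp hrη
        rw [abs_le]
        constructor <;> linarith [h2.1, h2.2, h3.1, h3.2]
      -- oscillation facts
      have hgosc : ∀ ξ ∈ Set.Icc x z, |g ξ - g x| ≤ η := fun ξ hξ => (hP ξ hξ).2.1
      have hνosc : ∀ ξ ∈ Set.Icc x z, |ν z - ν ξ| ≤ η := by
        intro ξ hξ
        have h1 := (hP ξ hξ).2.2.1
        have h2 := (hP z ⟨hxz.le, le_refl z⟩).2.2.1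
        have h3 : ν z - ν ξ = (ν z - ν x) + (ν x - ν ξ) := by ring
        rw [h3]
        calc |(ν z - ν x) + (ν x - ν ξ)| ≤ |ν z - ν x| + |ν x - ν ξ| := abs_add_le _ _
          _ ≤ η := by rw [abs_sub_comm (ν x) (ν ξ)]; linarith
      -- bound on A
      have hMgx : ∀ ξ ∈ Set.Icc x z, |g ξ| ≤ Mg := fun ξ hξ => hMg ξ (hsub hξ)
      have hAbound : |A| ≤ Mg * Iγ := by
        rw [hAdef, hIγdef]
        calc |∫ ξ in x..z, γ ξ * g ξ| ≤ ∫ ξ in x..z, |γ ξ * g ξ| :=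
              intervalIntegral.abs_integral_le_integral_abs hxz.le
          _ ≤ ∫ ξ in x..z, Mg * |γ ξ| := by
              apply intervalIntegral.integral_mono_on hxz.le hIγg.abs
                (((hIγ x z).abs).const_mul Mg)
              intro ξ hξ
              rw [abs_mul, mul_comm Mg]
              exact mul_le_mul_of_nonneg_left (hMgx ξ hξ) (abs_nonneg _)
          _ = Mg * ∫ ξ in x..z, |γ ξ| := intervalIntegral.integral_const_mul _ _
      -- A - g x * r
      have hAr : A - g x * r = ∫ ξ in x..z, γ ξ * (g ξ - g x) := by
        have h1 : ∫ ξ in x..z, γ ξ * (g ξ - g x)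
            = (∫ ξ in x..z, γ ξ * g ξ) - ∫ ξ in x..z, γ ξ * g x := by
          rw [← intervalIntegral.integral_sub hIγg ((hIγ x z).mul_const (g x))]
          congr 1; ext ξ; ring
        rw [h1, intervalIntegral.integral_mul_const, ← hAdef, ← hrdef]
        ring
      have hArb : A - g x * r ≤ η * Iγ := by
        rw [hAr, hIγdef]
        have hint1 : IntervalIntegrable (fun ξ => γ ξ * (g ξ - g x)) volume x z :=
          (hIγ x z).mul_continuousOn (hgcont.sub continuous_const).continuousOn
        calc (∫ ξ in x..z, γ ξ * (g ξ - g x)) ≤ |∫ ξ in x..z, γ ξ * (g ξ - g x)| := le_abs_self _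
          _ ≤ ∫ ξ in x..z, |γ ξ * (g ξ - g x)| :=
              intervalIntegral.abs_integral_le_integral_abs hxz.le
          _ ≤ ∫ ξ in x..z, η * |γ ξ| := by
              apply intervalIntegral.integral_mono_on hxz.le hint1.abs
                (((hIγ x z).abs).const_mul η)
              intro ξ hξ
              rw [abs_mul, mul_comm η]
              exact mul_le_mul_of_nonneg_left (hgosc ξ hξ) (abs_nonneg _)
          _ = η * ∫ ξ in x..z, |γ ξ| := intervalIntegral.integral_const_mul _ _
      -- the β term
      have hT4 : Ib * ν z - Jβ = ∫ ξ in x..z, β ξ * (ν z - ν ξ) := by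
        have h1 : ∫ ξ in x..z, β ξ * (ν z - ν ξ)
            = (∫ ξ in x..z, β ξ * ν z) - ∫ ξ in x..z, β ξ * ν ξ := by
          rw [← intervalIntegral.integral_sub ((hIβ x z).mul_const (ν z)) (hIβν x z)]
          congr 1; ext ξ; ring
        rw [h1, intervalIntegral.integral_mul_const, ← hIbdef, ← hJdef]
      have hT4b : Ib * ν z - Jβ ≤ η * Ib := by
        rw [hT4, hIbdef]
        have hint1 : IntervalIntegrable (fun ξ => β ξ * (ν z - ν ξ)) volume x z :=
          (hIβ x z).mul_continuousOn (continuous_const.sub hνcont).continuousOn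
        calc (∫ ξ in x..z, β ξ * (ν z - ν ξ)) ≤ ∫ ξ in x..z, β ξ * η := by
              apply intervalIntegral.integral_mono_on hxz.le hint1 ((hIβ x z).mul_const η)
              intro ξ hξ
              exact mul_le_mul_of_nonneg_left
                (le_trans (le_abs_self _) (hνosc ξ hξ)) (hβpos ξ)
          _ = η * ∫ ξ in x..z, β ξ := by rw [intervalIntegral.integral_mul_const]; ring
      -- B z
      have hBzx : B z = B x + Jβ := by
        simp only [hBdef, hJdef]
        have h1 : (∫ ξ in (0:ℝ)..x, β ξ * ν ξ) + ∫ ξ in x..z, β ξ * ν ξ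
            = ∫ ξ in (0:ℝ)..z, β ξ * ν ξ :=
          intervalIntegral.integral_add_adjacent_intervals (hIβν 0 x) (hIβν x z)
        linarith
      -- pointwise bounds at x
      have hgxnn : 0 ≤ g x := hg0 x ⟨hx0, hxT.le⟩
      have hgxMg : g x ≤ Mg := le_trans (le_abs_self _) (hMg x ⟨hx0, hxT.le⟩)
      have hνxMν : ν x ≤ Mν := hMν x ⟨hx0, hxT.le⟩
      have hνxpos : 0 < ν x := hνpos x
      -- the four building blocks
      have hgz : g z * ν z ≤ (g x + A + q * Ib) * ν z :=
        mul_le_mul_of_nonneg_right (by linarith) (hνpos z).le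
      have hb1 : g x * ν z - g x * ν x ≤ -(g x * ν x * r) + Mg * Mν * (η * Iγ) := by
        rw [hνz]
        have h1 : g x * ν x * (Real.exp (-r) - 1) ≤ g x * ν x * (-r + η * Iγ) :=
          mul_le_mul_of_nonneg_left (by linarith) (mul_nonneg hgxnn hνxpos.le)
        have h2 : g x * ν x * (η * Iγ) ≤ Mg * Mν * (η * Iγ) := by
          have hηIγ : 0 ≤ η * Iγ := mul_nonneg hη.le hIγnn
          have h3 : g x * ν x ≤ Mg * Mν := mul_le_mul hgxMg hνxMν hνxpos.le hMgnn
          exact mul_le_mul_of_nonneg_right h3 hηIγ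
        linarith
      have hb2 : A * ν z - A * ν x ≤ 2 * Mg * Mν * (η * Iγ) := by
        rw [hνz]
        have h1 : A * (ν x * (Real.exp (-r) - 1))
            ≤ |A| * (ν x * |Real.exp (-r) - 1|) := by
          calc A * (ν x * (Real.exp (-r) - 1)) ≤ |A * (ν x * (Real.exp (-r) - 1))| :=
                le_abs_self _
            _ = |A| * (ν x * |Real.exp (-r) - 1|) := by
                rw [abs_mul, abs_mul, abs_of_nonneg hνxpos.le]
        have h2 : |A| * (ν x * |Real.exp (-r) - 1|) ≤ (Mg * Iγ) * (Mν * (2 * η)) := by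
          apply mul_le_mul hAbound
          · exact mul_le_mul hνxMν hexp2 (abs_nonneg _) hMνnn
          · exact mul_nonneg hνxpos.le (abs_nonneg _)
          · exact mul_nonneg hMgnn hIγnn
        linarith
      have hb3 : A * ν x - g x * ν x * r ≤ Mν * (η * Iγ) := by
        have h1 : ν x * (A - g x * r) ≤ ν x * (η * Iγ) :=
          mul_le_mul_of_nonneg_left hArb hνxpos.le
        have h2 : ν x * (η * Iγ) ≤ Mν * (η * Iγ) :=
          mul_le_mul_of_nonneg_right hνxMν (mul_nonneg hη.le hIγnn)
        linarith
      have hb4 : q * Ib * ν z - q * Jβ ≤ q * (η * Ib) := by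
        have h1 := mul_le_mul_of_nonneg_left hT4b hq0.le
        linarith
      -- nonnegativity fillers
      have hnn1 : (0:ℝ) ≤ 3 * Mg * Mν * (η * Ib) :=
        mul_nonneg (mul_nonneg (mul_nonneg (by norm_num) hMgnn) hMνnn)
          (mul_nonneg hη.le hIbnn)
      have hnn2 : (0:ℝ) ≤ Mν * (η * Ib) := mul_nonneg hMνnn (mul_nonneg hη.le hIbnn)
      have hnn3 : (0:ℝ) ≤ q * (η * Iγ) := mul_nonneg hq0.le (mul_nonneg hη.le hIγnn)
      -- combine everything
      have h5 : h z - h x ≤ η * (3 * Mg * Mν + Mν + q) * (Iγ + Ib) := by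
        simp only [hhdef]
        rw [hBzx]
        linarith [hgz, hb1, hb2, hb3, hb4, hnn1, hnn2, hnn3]
      have hCineq : η * (3 * Mg * Mν + Mν + q) * (Iγ + Ib) ≤ ε * (W z - W x) := by
        rw [hWzx, ← hCdef]
        exact mul_le_mul_of_nonneg_right hηC (add_nonneg hIγnn hIbnn)
      have h7 : h x ≤ ε * (1 + W x) := hxS
      have hzS : z ∈ S := by
        show h z ≤ ε * (1 + W z)
        linarith [h5, hCineq]
      exact ⟨z, hzS, hxz, hzy⟩
  -- conclusion
  intro t ht
  exact hSlt t ⟨ht.1.le, ht.2⟩ (main ⟨ht.1.le, ht.2⟩)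
end

section
/- Let γ, β be continuous with β ≥ 0, γ(t) < 0 for large t, ∫₀ᵗ γ(ξ)dξ → −∞ as t → ∞, and β(t)/γ(t) → 0 as t → ∞. Let ν(t) = exp(−∫₀ᵗ γ). Then (∫₀ᵗ β(ξ)ν(ξ)dξ)/ν(t) → 0 as t → ∞. -/
/-!
With `ν' = -γ ν`, the hypothesis `β / γ → 0` says `β ν = o(ν')`, and `ν'` is eventually nonnegative
with `ν → ∞`. Integrating a little-o relation against a nonnegative derivative whose primitive
diverges preserves it (the `∞/∞` form of L'Hôpital's rule), so `∫₀ᵗ β ν = o(ν t)`.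
-/

open MeasureTheory intervalIntegral Real Filter

open Set in
theorem norm_intervalIntegral_le_mul_sub_of_hasDerivAt {E : Type*} [NormedAddCommGroup E]
    [NormedSpace ℝ E] {f : ℝ → E} {g G : ℝ → ℝ} {c a b : ℝ} (hab : a ≤ b)
    (hG : ∀ x ∈ Icc a b, HasDerivAt G (g x) x) (hg : ∀ x ∈ Icc a b, 0 ≤ g x)
    (hfg : ∀ x ∈ Icc a b, ‖f x‖ ≤ c * g x) :
    ‖∫ x in a..b, f x‖ ≤ c * (G b - G a) := by
  have hG_cont : ContinuousOn G (Icc a b) :=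
    fun x hx => (hG x hx).continuousAt.continuousWithinAt
  have hg_int : IntervalIntegrable g volume a b :=
    intervalIntegrable_deriv_of_nonneg (by rwa [uIcc_of_le hab])
      (fun x hx => hG x (Ioo_subset_Icc_self (by simpa [hab] using hx)))
      (fun x hx => hg x (Ioo_subset_Icc_self (by simpa [hab] using hx)))
  calc ‖∫ x in a..b, f x‖ ≤ ∫ x in a..b, c * g x :=
        norm_integral_le_of_norm_le hab
          (ae_of_all _ fun x hx => hfg x (Ioc_subset_Icc_self hx)) (hg_int.const_mul c)
    _ = c * (G b - G a) := by
        rw [intervalIntegral.integral_const_mul,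
          integral_eq_sub_of_hasDerivAt_of_le hab hG_cont
            (fun x hx => hG x (Ioo_subset_Icc_self hx)) hg_int]

theorem Asymptotics.IsLittleO.intervalIntegral_of_hasDerivAt_atTop {E : Type*}
    [NormedAddCommGroup E] [NormedSpace ℝ E] {f : ℝ → E} {g G : ℝ → ℝ} {a : ℝ}
    (hfg : f =o[atTop] g) (hf : ∀ b, IntervalIntegrable f volume a b)
    (hG : ∀ᶠ x in atTop, HasDerivAt G (g x) x) (hg : ∀ᶠ x in atTop, 0 ≤ g x)
    (hG_top : Tendsto G atTop atTop) :
    (fun t => ∫ x in a..t, f x) =o[atTop] G := by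
  refine IsLittleO.of_bound fun c hc => ?_
  obtain ⟨T, hT⟩ := eventually_atTop.1 (hG.and (hg.and (hfg.bound (half_pos hc))))
  have hfg_T : ∀ x ≥ T, ‖f x‖ ≤ c / 2 * g x := fun x hx => by
    simpa only [Real.norm_of_nonneg (hT x hx).2.1] using (hT x hx).2.2
  -- `G t` eventually absorbs the fixed contribution of `[a, T]`
  have hG_large : ∀ᶠ t in atTop, ‖∫ x in a..T, f x‖ - c / 2 * G T ≤ c / 2 * G t ∧ 0 ≤ G t :=
    ((tendsto_id.const_mul_atTop (half_pos hc)).comp hG_top).eventually_ge_atTop _ |>.and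
      (hG_top.eventually_ge_atTop 0)
  filter_upwards [hG_large, eventually_ge_atTop T] with t ⟨hGt, hGt_nonneg⟩ hTt
  have htail := norm_intervalIntegral_le_mul_sub_of_hasDerivAt hTt
    (fun x hx => (hT x hx.1).1) (fun x hx => (hT x hx.1).2.1) (fun x hx => hfg_T x hx.1)
  calc ‖∫ x in a..t, f x‖
      = ‖(∫ x in a..T, f x) + ∫ x in T..t, f x‖ := by
        rw [integral_add_adjacent_intervals (hf T) ((hf T).symm.trans (hf t))]
    _ ≤ ‖∫ x in a..T, f x‖ + c / 2 * (G t - G T) := (norm_add_le _ _).trans (by gcongr)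
    _ ≤ c * ‖G t‖ := by
        rw [Real.norm_of_nonneg hGt_nonneg]
        linarith

theorem hasDerivAt_exp_neg_integral {γ : ℝ → ℝ} (hγ : Continuous γ) (a t : ℝ) :
    HasDerivAt (fun s => exp (-∫ ξ in a..s, γ ξ)) (-γ t * exp (-∫ ξ in a..t, γ ξ)) t := by
  have h := ((hγ.integral_hasStrictDerivAt a t).hasDerivAt.neg).exp
  rwa [mul_comm] at h

open Asymptotics in
theorem lhospital_limit_thm27_general
    (γ β ν : ℝ → ℝ)
    (hγ : Continuous γ) (hβ : Continuous β)
    (hγneg : ∃ T, ∀ t ≥ T, γ t < 0)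
    (hγint : Tendsto (fun t => ∫ ξ in (0:ℝ)..t, γ ξ) atTop atBot)
    (hβγ : Tendsto (fun t => β t / γ t) atTop (nhds 0))
    (hν : ∀ t, ν t = Real.exp (-∫ ξ in (0:ℝ)..t, γ ξ)) :
    Tendsto (fun t => (∫ ξ in (0:ℝ)..t, β ξ * ν ξ) / ν t) atTop (nhds 0) := by
  obtain rfl : ν = fun t => exp (-∫ ξ in (0:ℝ)..t, γ ξ) := funext hν
  have hν_deriv := hasDerivAt_exp_neg_integral hγ 0
  have hν_cont : Continuous fun t => exp (-∫ ξ in (0:ℝ)..t, γ ξ) :=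
    continuous_iff_continuousAt.2 fun t => (hν_deriv t).continuousAt
  have hν_top : Tendsto (fun t => exp (-∫ ξ in (0:ℝ)..t, γ ξ)) atTop atTop :=
    tendsto_exp_atTop.comp (tendsto_neg_atBot_atTop.comp hγint)
  have hγ_neg : ∀ᶠ t in atTop, γ t < 0 := eventually_atTop.2 hγneg
  have hβ_o_γ : β =o[atTop] γ :=
    (isLittleO_iff_tendsto' (hγ_neg.mono fun t ht h => absurd h ht.ne)).2 hβγ
  have hβν_o : (fun t => β t * exp (-∫ ξ in (0:ℝ)..t, γ ξ)) =o[atTop]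
      fun t => -γ t * exp (-∫ ξ in (0:ℝ)..t, γ ξ) :=
    hβ_o_γ.neg_right.mul_isBigO (isBigO_refl _ _)
  refine (hβν_o.intervalIntegral_of_hasDerivAt_atTop
    (fun b => (hβ.mul hν_cont).intervalIntegrable 0 b) (.of_forall hν_deriv)
    (hγ_neg.mono fun t ht => ?_) hν_top).tendsto_div_nhds_zero
  exact mul_nonneg (neg_nonneg.2 ht.le) (exp_pos _).le

theorem lhospital_limit_thm27
    (γ β ν : ℝ → ℝ)
    (hγ : Continuous γ) (hβ : Continuous β) (hβpos : ∀ t, 0 ≤ β t)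
    (hγneg : ∃ T, ∀ t ≥ T, γ t < 0)
    (hγint : Tendsto (fun t => ∫ ξ in (0:ℝ)..t, γ ξ) atTop atBot)
    (hβγ : Tendsto (fun t => β t / γ t) atTop (nhds 0))
    (hν : ∀ t, ν t = Real.exp (-∫ ξ in (0:ℝ)..t, γ ξ)) :
    Tendsto (fun t => (∫ ξ in (0:ℝ)..t, β ξ * ν ξ) / ν t) atTop (nhds 0) :=
  lhospital_limit_thm27_general γ β ν hγ hβ hγneg hγint hβγ hν
end
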